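/- Let R be a regular F-finite domain of characteristic p, f nonzero, α = r/(p^e−1), and I ⊆ τ(f^α) a nonzero ideal with I ⊆ (I^{[p^e]} : f^r). Then I = τ(f^α). -/

import Mathlib

/-- The `q`-th Frobenius power `I^{[q]}` of an ideal: the ideal generated by `q`-th powers
of elements of `I`. -/
def frobPow {R : Type*} [CommRing R] (I : Ideal R) (q : ℕ) : Ideal R :=
  Ideal.span ((fun x => x ^ q) '' (I : Set R))
/-- `I^{[1/q]}`: the smallest ideal `J` with `I ⊆ J^{[q]}` (in a regular ring). -/
noncomputable def frobRoot {R : Type*} [CommRing R] (I : Ideal R) (q : ℕ) : Ideal R :=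
  sInf {J : Ideal R | I ≤ frobPow J q}

/-- The generalized test ideal `τ(f^c) = ⋃_e (f^{⌈c p^e⌉})^{[1/p^e]}`. -/
noncomputable def testIdeal {R : Type*} [CommRing R] (p : ℕ) (f : R) (c : ℝ) : Ideal R :=
  ⨆ e : ℕ, frobRoot (Ideal.span {f ^ (⌈c * (p : ℝ) ^ e⌉₊)}) (p ^ e)

/-! Write `q = p ^ e`. Iterating `f ^ r * I ⊆ I^{[q]}` gives
`f ^ (r * (1 + q + ⋯ + q ^ (k - 1))) * I ⊆ I^{[q ^ k]}`, and `r * (1 + q + ⋯ + q ^ (k - 1))` is at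
most `⌈α p ^ s⌉ * p ^ t` when `s + t = e * k`. So for `0 ≠ x ∈ I` and `n = ⌈α p ^ s⌉`, the element
`x * (f ^ n) ^ (p ^ t)` lies in `(I^{[p ^ s]})^{[p ^ t]}` for arbitrarily large `t`. Flatness of
Frobenius turns this into `x ∈ (I^{[p ^ s]} : f ^ n)^{[p ^ t]}`, hence `x` lies in every power of
that colon ideal, and Krull's intersection theorem forces `f ^ n ∈ I^{[p ^ s]}`. This says
exactly that each ideal `(f ^ n)^{[1/p ^ s]}` in the union defining `τ(f ^ α)` is contained in `I`. -/

open Ideal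

theorem Ideal.map_colon_span_singleton_le {R S : Type*} [CommRing R] [CommRing S]
    (φ : R →+* S) (J : Ideal R) (g : R) :
    (J.colon (span {g})).map φ ≤ (J.map φ).colon (span {φ g}) := by
  rw [map_le_iff_le_comap]
  intro x hx
  rw [mem_comap, mem_colon_span_singleton, ← map_mul]
  exact mem_map_of_mem φ (mem_colon_span_singleton.mp hx)

theorem Ideal.colon_map_le_map_colon_of_flat {R S : Type*} [CommRing R] [CommRing S]
    {φ : R →+* S} (hφ : φ.Flat) (J : Ideal R) (g : R) :
    (J.map φ).colon (span {φ g}) ≤ (J.colon (span {g})).map φ := by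
  algebraize [φ]
  intro x hx
  rw [mem_colon_span_singleton, map, Submodule.mem_span_set'] at hx
  obtain ⟨n, a, v, hsum⟩ := hx
  choose j hjJ hjv using fun i => (v i).2
  -- By the equational criterion the relation `g • x - ∑ jᵢ • aᵢ = 0` is trivial; the
  -- coefficients expressing `x` in terms of the witnesses then lie in `J : g`.
  have hrel : ∑ i, (Fin.cons g j : Fin (n + 1) → R) i • (Fin.cons x (-a) : Fin (n + 1) → S) i
      = 0 := by
    simp only [Fin.sum_univ_succ, Fin.cons_zero, Fin.cons_succ, Algebra.smul_def,
      RingHom.algebraMap_toAlgebra, hjv, Pi.neg_apply, mul_neg, Finset.sum_neg_distrib]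
    simp only [smul_eq_mul] at hsum
    rw [mul_comm, ← hsum, add_neg_eq_zero]
    exact Finset.sum_congr rfl fun i _ => mul_comm _ _
  obtain ⟨k, b, y, hxy, hb⟩ :=
    Module.Flat.isTrivialRelation_of_sum_smul_eq_zero (R := R) (M := S) hrel
  have hx : x = ∑ l, φ (b 0 l) * y l := by
    simpa [Algebra.smul_def, RingHom.algebraMap_toAlgebra] using hxy 0
  rw [hx]
  refine Ideal.sum_mem _ fun l _ => mul_mem_right _ _ (mem_map_of_mem _ ?_)
  have hbl := hb l
  rw [Fin.sum_univ_succ] at hbl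
  simp only [Fin.cons_zero, Fin.cons_succ] at hbl
  rw [mem_colon_span_singleton, mul_comm, eq_neg_of_add_eq_zero_left hbl]
  exact neg_mem (Ideal.sum_mem _ fun i _ => mul_mem_right _ _ (hjJ i))

section FrobeniusPower

variable {R : Type*} [CommRing R]

theorem frobPow_mono {I J : Ideal R} (hIJ : I ≤ J) (q : ℕ) : frobPow I q ≤ frobPow J q :=
  span_mono (Set.image_mono hIJ)

theorem frobPow_one (I : Ideal R) : frobPow I 1 = I := by
  simp [frobPow]

theorem frobPow_le_pow (I : Ideal R) (q : ℕ) : frobPow I q ≤ I ^ q :=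
  span_le.mpr fun _ ⟨_, hx, hq⟩ => hq ▸ pow_mem_pow hx q

theorem frobRoot_le {I J : Ideal R} {q : ℕ} (h : I ≤ frobPow J q) : frobRoot I q ≤ J :=
  sInf_le h

theorem testIdeal_le_of_forall_pow_mem_frobPow {p : ℕ} {f : R} {c : ℝ} {I : Ideal R}
    (h : ∀ s : ℕ, f ^ ⌈c * (p : ℝ) ^ s⌉₊ ∈ frobPow I (p ^ s)) : testIdeal p f c ≤ I :=
  iSup_le fun s => frobRoot_le ((span_singleton_le_iff_mem _).mpr (h s))

variable (p : ℕ) [ExpChar R p]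

theorem frobPow_eq_map (I : Ideal R) (t : ℕ) :
    frobPow I (p ^ t) = I.map (iterateFrobenius R p t) := rfl

theorem frobPow_frobPow (I : Ideal R) (a b : ℕ) :
    frobPow (frobPow I (p ^ a)) (p ^ b) = frobPow I (p ^ (a + b)) := by
  rw [frobPow_eq_map, frobPow_eq_map, frobPow_eq_map, map_map, add_comm a b,
    iterateFrobenius_add]

theorem frobPow_le_colon_frobPow {I : Ideal R} {q : ℕ} {g : R}
    (h : I ≤ (frobPow I q).colon (span {g})) (t : ℕ) :
    frobPow I (p ^ t) ≤ (frobPow (frobPow I q) (p ^ t)).colon (span {g ^ p ^ t}) :=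
  (frobPow_mono h _).trans (map_colon_span_singleton_le (iterateFrobenius R p t) _ g)

theorem flat_iterateFrobenius (hflat : (frobenius R p).Flat) (t : ℕ) :
    (iterateFrobenius R p t).Flat := by
  induction t with
  | zero => exact iterateFrobenius_zero R p ▸ RingHom.Flat.id R
  | succ t ih =>
    rw [iterateFrobenius_add, iterateFrobenius_one]
    exact hflat.comp ih

theorem le_colon_frobPow_iterate {I : Ideal R} {e : ℕ} {g : R}
    (h : I ≤ (frobPow I (p ^ e)).colon (span {g})) (k : ℕ) :
    I ≤ (frobPow I (p ^ (e * k))).colon (span {g ^ ∑ i ∈ Finset.range k, p ^ (e * i)}) := by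
  induction k with
  | zero =>
    intro x hx
    simpa [frobPow_one] using hx
  | succ k ih =>
    intro x hx
    have hstep := frobPow_le_colon_frobPow p h (e * k) (mem_colon_span_singleton.mp (ih hx))
    rw [frobPow_frobPow, add_comm e, ← mul_add_one, mem_colon_span_singleton, mul_assoc,
      ← pow_add] at hstep
    rwa [mem_colon_span_singleton, Finset.sum_range_succ]

variable [IsDomain R] [IsNoetherianRing R] [Fact p.Prime]

theorem mem_of_frequently_mul_pow_mem_frobPow (hflat : (frobenius R p).Flat) {J : Ideal R}
    {g x : R} (hx : x ≠ 0) (h : ∃ᶠ t in Filter.atTop, x * g ^ p ^ t ∈ frobPow J (p ^ t)) :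
    g ∈ J := by
  have hcolon : J.colon (span {g}) = ⊤ := by
    by_contra hne
    refine hx ((Submodule.mem_bot R).mp ?_)
    rw [← iInf_pow_eq_bot_of_isDomain (I := J.colon (span {g})) hne]
    refine Submodule.mem_iInf _ |>.mpr fun m => ?_
    obtain ⟨t, hmt, ht⟩ := Filter.frequently_atTop.mp h m
    have hxt : x ∈ frobPow (J.colon (span {g})) (p ^ t) :=
      colon_map_le_map_colon_of_flat (flat_iterateFrobenius p hflat t) J g
        (mem_colon_span_singleton.mpr ht)
    exact pow_le_pow_right (hmt.trans (Nat.lt_pow_self (Fact.out : p.Prime).one_lt).le)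
      (frobPow_le_pow _ _ hxt)
  simpa using (eq_top_iff_one _).mp hcolon

theorem pow_mem_frobPow_of_le_colon (hflat : (frobenius R p).Flat) {I : Ideal R} (hI : I ≠ ⊥)
    {f : R} {r e : ℕ} (he : 0 < e) (h : I ≤ (frobPow I (p ^ e)).colon (span {f ^ r}))
    {n s : ℕ} (hn : r * p ^ s ≤ n * (p ^ e - 1)) : f ^ n ∈ frobPow I (p ^ s) := by
  obtain ⟨x, hxI, hx0⟩ := Submodule.exists_mem_ne_zero_of_ne_bot hI
  have hpe : 1 < p ^ e := Nat.one_lt_pow he.ne' (Fact.out : p.Prime).one_lt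
  refine mem_of_frequently_mul_pow_mem_frobPow p hflat hx0
    (Filter.frequently_atTop.mpr fun m => ?_)
  obtain ⟨k, hk⟩ : ∃ k, s + m ≤ e * k := ⟨s + m, Nat.le_mul_of_pos_left _ he⟩
  set u := ∑ i ∈ Finset.range k, p ^ (e * i)
  have hgeom : u * (p ^ e - 1) + 1 = p ^ s * p ^ (e * k - s) := by
    rw [← pow_add, Nat.add_sub_cancel' (by omega)]
    simpa only [Nat.sub_add_cancel hpe.le, ← pow_mul] using geom_sum_mul_add (p ^ e - 1) k
  have hru : r * u ≤ n * p ^ (e * k - s) := by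
    refine Nat.le_of_mul_le_mul_right ?_ (Nat.sub_pos_of_lt hpe)
    calc r * u * (p ^ e - 1) ≤ r * (u * (p ^ e - 1) + 1) :=
          (mul_assoc r u _).trans_le (Nat.mul_le_mul_left r (Nat.le_succ _))
      _ = r * p ^ s * p ^ (e * k - s) := by rw [hgeom, mul_assoc]
      _ ≤ n * (p ^ e - 1) * p ^ (e * k - s) := Nat.mul_le_mul_right _ hn
      _ = n * p ^ (e * k - s) * (p ^ e - 1) := by ring
  refine ⟨e * k - s, by omega, ?_⟩
  have hxk := mem_colon_span_singleton.mp (le_colon_frobPow_iterate p h k hxI)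
  have hsplit : x * (f ^ n) ^ p ^ (e * k - s) =
      x * (f ^ r) ^ u * f ^ (n * p ^ (e * k - s) - r * u) := by
    rw [← pow_mul, ← pow_mul, mul_assoc, ← pow_add, Nat.add_sub_cancel' hru]
  rw [frobPow_frobPow, Nat.add_sub_cancel' (by omega), hsplit]
  exact mul_mem_right _ _ hxk

end FrobeniusPower

theorem mul_pow_le_ceil_mul_sub_one {p e r : ℕ} {α : ℝ} (hpe : 1 < p ^ e)
    (hα : α = r / ((p : ℝ) ^ e - 1)) (s : ℕ) :
    r * p ^ s ≤ ⌈α * (p : ℝ) ^ s⌉₊ * (p ^ e - 1) := by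
  have hq : (0 : ℝ) < (p : ℝ) ^ e - 1 := by
    have : (1 : ℝ) < (p : ℝ) ^ e := by exact_mod_cast hpe
    linarith
  rw [← Nat.cast_le (α := ℝ)]
  push_cast [Nat.cast_sub hpe.le]
  calc (r : ℝ) * p ^ s = α * p ^ s * ((p : ℝ) ^ e - 1) := by rw [hα]; field_simp
    _ ≤ ⌈α * (p : ℝ) ^ s⌉₊ * ((p : ℝ) ^ e - 1) :=
      mul_le_mul_of_nonneg_right (Nat.le_ceil _) hq.le

theorem stmt10_general {R : Type*} [CommRing R] [IsDomain R] [IsNoetherianRing R]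
    (p : ℕ) [Fact p.Prime] [ExpChar R p]
    (hflat : @Module.Flat R R _ _ (Module.compHom R (frobenius R p)))
    (f : R) (r e : ℕ) (he : 0 < e)
    (α : ℝ) (hα : α = (r : ℝ) / ((p : ℝ) ^ e - 1))
    (I : Ideal R) (hI0 : I ≠ ⊥) (hIτ : I ≤ testIdeal p f α)
    (h : I ≤ (frobPow I (p ^ e)).colon (Ideal.span {f ^ r})) :
    I = testIdeal p f α := by
  have hpe : 1 < p ^ e := Nat.one_lt_pow he.ne' (Fact.out : p.Prime).one_lt
  refine le_antisymm hIτ (testIdeal_le_of_forall_pow_mem_frobPow fun s => ?_)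
  exact pow_mem_frobPow_of_le_colon p hflat hI0 he h (mul_pow_le_ceil_mul_sub_one hpe hα s)

/-- If `I ⊆ τ(f^α)` is a nonzero ideal with `I ⊆ (I^{[p^e]} : f^r)`, where
`α = r/(p^e − 1)`, then `I = τ(f^α)`. -/
theorem stmt10 {R : Type*} [CommRing R] [IsDomain R] [IsNoetherianRing R]
    (p : ℕ) [Fact p.Prime] [CharP R p] [ExpChar R p]
    (hflat : @Module.Flat R R _ _ (Module.compHom R (frobenius R p)))
    (hFfin : @Module.Finite R R _ _ (Module.compHom R (frobenius R p)))
    (f : R) (hf : f ≠ 0) (r e : ℕ) (hr : 0 < r) (he : 0 < e)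
    (α : ℝ) (hα : α = (r : ℝ) / ((p : ℝ) ^ e - 1))
    (I : Ideal R) (hI0 : I ≠ ⊥) (hIτ : I ≤ testIdeal p f α)
    (h : I ≤ (frobPow I (p ^ e)).colon (Ideal.span {f ^ r})) :
    I = testIdeal p f α :=
  stmt10_general p hflat f r e he α hα I hI0 hIτ h
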